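/- With the Friedrichs construction above, the operator F = T⁻¹ is self-adjoint on H, has domain contained in D, and satisfies Q(φ,ψ) = ⟨Fφ, ψ⟩ for all φ ∈ Dom(F) and ψ ∈ D; moreover F ≥ 1 (i.e., ⟨Fφ,φ⟩ ≥ ‖φ‖²). -/

import Mathlib

/-! The hypothesis on `T₀` says exactly `T₀ = J†`, so `T = J J†` is a bounded self-adjoint operator.
Being injective, it has dense range, since `(range T)ᗮ = ker T† = ker T = 0`. Hence `F = T⁻¹` is
densely defined and symmetric, and `y ∈ dom F†` forces `⟪T (F† y), α⟫ = ⟪y, α⟫` for every `α`,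
i.e. `y ∈ range T = dom F`; so `F = F†`. Finally, as `J` is a contraction,
`⟪F x, x⟫ = ‖J† (F x)‖² ≥ ‖J J† (F x)‖² = ‖x‖²`. -/

open scoped InnerProductSpace InnerProduct

namespace LinearMap

variable {R M N : Type*} [Ring R] [AddCommGroup M] [Module R M] [AddCommGroup N] [Module R N]

noncomputable def inversePMap (f : M →ₗ[R] N) : N →ₗ.[R] M := (f.toPMap ⊤).inverse

variable {f : M →ₗ[R] N}

theorem inversePMap_domain : f.inversePMap.domain = range f := by
  rw [inversePMap, LinearPMap.inverse_domain]
  ext y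
  exact ⟨fun ⟨x, hx⟩ ↦ ⟨x, hx⟩, fun ⟨x, hx⟩ ↦ ⟨⟨x, trivial⟩, hx⟩⟩

theorem inversePMap_apply (hf : Function.Injective f) (x : M) (h : f x ∈ f.inversePMap.domain) :
    f.inversePMap ⟨f x, h⟩ = x := by
  have hker : (f.toPMap ⊤).toFun.ker = ⊥ :=
    ker_eq_bot.mpr (hf.comp Subtype.val_injective)
  exact LinearPMap.inverse_apply_eq hker (x := ⟨x, trivial⟩) rfl

theorem apply_inversePMap (hf : Function.Injective f) (y : f.inversePMap.domain) :
    f (f.inversePMap y) = y := by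
  obtain ⟨y, hy⟩ := y
  obtain ⟨x, rfl⟩ := inversePMap_domain (f := f) ▸ hy
  rw [inversePMap_apply hf]

end LinearMap

namespace ContinuousLinearMap

variable {𝕜 E : Type*} [RCLike 𝕜] [NormedAddCommGroup E] [InnerProductSpace 𝕜 E] [CompleteSpace E]
  {T : E →L[𝕜] E}

theorem _root_.IsSelfAdjoint.denseRange_of_injective (hT : IsSelfAdjoint T)
    (hinj : Function.Injective T) : DenseRange T := by
  have hperp : T.rangeᗮ = ⊥ := by
    rw [orthogonal_range, hT.adjoint_eq, LinearMap.ker_eq_bot.mpr hinj]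
  change Dense (T.range : Set E)
  rw [Submodule.dense_iff_topologicalClosure_eq_top,
    Submodule.topologicalClosure_eq_top_iff, hperp]

theorem _root_.IsSelfAdjoint.isSelfAdjoint_inversePMap (hT : IsSelfAdjoint T)
    (hinj : Function.Injective T) : IsSelfAdjoint (T : E →ₗ[𝕜] E).inversePMap := by
  set F := (T : E →ₗ[𝕜] E).inversePMap
  have hF : F.domain = LinearMap.range (T : E →ₗ[𝕜] E) := LinearMap.inversePMap_domain
  have hTF : ∀ y : F.domain, T (F y) = y := LinearMap.apply_inversePMap hinj
  have hFT : ∀ α (h : T α ∈ F.domain), F ⟨T α, h⟩ = α := LinearMap.inversePMap_apply hinj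
  have hdense : Dense (F.domain : Set E) := by
    rw [hF]
    exact hT.denseRange_of_injective hinj
  have hsymm : F.IsFormalAdjoint F := fun x y ↦ by
    calc ⟪F x, y⟫_𝕜 = ⟪F x, T (F y)⟫_𝕜 := by rw [hTF]
      _ = ⟪T (F x), F y⟫_𝕜 := (hT.isSymmetric _ _).symm
      _ = ⟪(x : E), F y⟫_𝕜 := by rw [hTF]
  have hle : F ≤ F.adjoint := hsymm.le_adjoint hdense
  have hdom : F.adjoint.domain ≤ F.domain := by
    intro y hy
    rw [hF]
    refine ⟨F.adjoint ⟨y, hy⟩, ext_inner_right 𝕜 fun α ↦ ?_⟩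
    have hα : T α ∈ F.domain := hF ▸ ⟨α, rfl⟩
    calc ⟪T (F.adjoint ⟨y, hy⟩), α⟫_𝕜 = ⟪F.adjoint ⟨y, hy⟩, T α⟫_𝕜 := hT.isSymmetric _ _
      _ = ⟪y, F ⟨T α, hα⟩⟫_𝕜 := LinearPMap.adjoint_isFormalAdjoint hdense ⟨y, hy⟩ ⟨T α, hα⟩
      _ = ⟪y, α⟫_𝕜 := by rw [hFT]
  exact (LinearPMap.eq_of_le_of_domain_eq hle (le_antisymm hle.1 hdom)).symm

variable {D : Type*} [NormedAddCommGroup D] [InnerProductSpace 𝕜 D] [CompleteSpace D]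

theorem sq_norm_le_re_inner_inversePMap_self_comp_adjoint (J : D →L[𝕜] E)
    (hJ : ∀ φ, ‖J φ‖ ≤ ‖φ‖) (hinj : Function.Injective (J ∘L J†))
    (x : ((J ∘L J†) : E →ₗ[𝕜] E).inversePMap.domain) :
    ‖(x : E)‖ ^ 2 ≤ RCLike.re ⟪((J ∘L J†) : E →ₗ[𝕜] E).inversePMap x, x⟫_𝕜 := by
  set y := ((J ∘L J†) : E →ₗ[𝕜] E).inversePMap x
  have hy : J ((J†) y) = x := LinearMap.apply_inversePMap hinj x
  calc ‖(x : E)‖ ^ 2 = ‖J ((J†) y)‖ ^ 2 := by rw [hy]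
    _ ≤ ‖(J†) y‖ ^ 2 := by gcongr; exact hJ _
    _ = RCLike.re ⟪y, x⟫_𝕜 := by
      rw [apply_norm_sq_eq_inner_adjoint_right, adjoint_adjoint, comp_apply, hy]

end ContinuousLinearMap

theorem stmt_7_general {H D : Type*} [NormedAddCommGroup H] [InnerProductSpace ℂ H] [CompleteSpace H]
    [NormedAddCommGroup D] [InnerProductSpace ℂ D] [CompleteSpace D]
    (J : D →L[ℂ] H)
    (hcoercive : ∀ φ : D, ‖J φ‖ ≤ ‖φ‖)
    (T₀ : H →L[ℂ] D)
    (hT₀ : ∀ (α : H) (ψ : D), (inner ℂ (T₀ α) ψ : ℂ) = inner ℂ α (J ψ))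
    (hTinj : Function.Injective (J.comp T₀)) :
    ∃ F : H →ₗ.[ℂ] H,
      -- `Dom F = im T ⊆ im J = D`
      F.domain = LinearMap.range (J.comp T₀ : H →ₗ[ℂ] H) ∧
      -- `F = T⁻¹`
      (∀ (α : H) (h : J (T₀ α) ∈ F.domain), F ⟨J (T₀ α), h⟩ = α) ∧
      -- `F` is self-adjoint
      IsSelfAdjoint F ∧
      -- `Q(φ, ψ) = ⟨Fφ, ψ⟩` for all `φ ∈ Dom F`, `ψ ∈ D`
      (∀ (x : F.domain) (ψ : D), (inner ℂ (T₀ (F x)) ψ : ℂ) = inner ℂ (F x) (J ψ)) ∧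
      -- `F ≥ 1`: `⟨Fφ, φ⟩ ≥ ‖φ‖²`
      (∀ x : F.domain, ‖(x : H)‖ ^ 2 ≤ (inner ℂ (F x) (x : H) : ℂ).re) := by
  obtain rfl : T₀ = J† := (ContinuousLinearMap.eq_adjoint_iff T₀ J).mpr hT₀
  have hT : IsSelfAdjoint (J ∘L J†) :=
    (ContinuousLinearMap.isPositive_self_comp_adjoint J).isSelfAdjoint
  exact ⟨_, LinearMap.inversePMap_domain, LinearMap.inversePMap_apply hTinj,
    hT.isSelfAdjoint_inversePMap hTinj, fun x ↦ hT₀ _,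
    ContinuousLinearMap.sq_norm_le_re_inner_inversePMap_self_comp_adjoint J hcoercive hTinj⟩

/-- The Friedrichs extension: with `T = J ∘ T₀ : H → H` the bounded injective self-adjoint
operator of the Friedrichs construction (`Q(T₀α, ψ)_D = ⟨α, Jψ⟩_H`), the operator
`F = T⁻¹`, with domain `im T`, is self-adjoint, has domain contained in `D` (the range of
`J`), satisfies `Q(φ,ψ) = ⟨Fφ, ψ⟩` for `φ ∈ Dom F`, `ψ ∈ D`, and `F ≥ 1`. -/
theorem stmt_7 {H D : Type*} [NormedAddCommGroup H] [InnerProductSpace ℂ H] [CompleteSpace H]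
    [NormedAddCommGroup D] [InnerProductSpace ℂ D] [CompleteSpace D]
    (J : D →L[ℂ] H) (hJinj : Function.Injective J) (hJdense : DenseRange J)
    (hcoercive : ∀ φ : D, ‖J φ‖ ≤ ‖φ‖)
    (T₀ : H →L[ℂ] D)
    (hT₀ : ∀ (α : H) (ψ : D), (inner ℂ (T₀ α) ψ : ℂ) = inner ℂ α (J ψ))
    (hTinj : Function.Injective (J.comp T₀)) :
    ∃ F : H →ₗ.[ℂ] H,
      -- `Dom F = im T ⊆ im J = D`
      F.domain = LinearMap.range (J.comp T₀ : H →ₗ[ℂ] H) ∧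
      -- `F = T⁻¹`
      (∀ (α : H) (h : J (T₀ α) ∈ F.domain), F ⟨J (T₀ α), h⟩ = α) ∧
      -- `F` is self-adjoint
      IsSelfAdjoint F ∧
      -- `Q(φ, ψ) = ⟨Fφ, ψ⟩` for all `φ ∈ Dom F`, `ψ ∈ D`
      (∀ (x : F.domain) (ψ : D), (inner ℂ (T₀ (F x)) ψ : ℂ) = inner ℂ (F x) (J ψ)) ∧
      -- `F ≥ 1`: `⟨Fφ, φ⟩ ≥ ‖φ‖²`
      (∀ x : F.domain, ‖(x : H)‖ ^ 2 ≤ (inner ℂ (F x) (x : H) : ℂ).re) :=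
  stmt_7_general J hcoercive T₀ hT₀ hTinj
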